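/- The following are equivalent: (1) there exist a function f ∈ Dom_+(Γ) with f(x) > 0 for all x ∈ 𝕏 and a constant ε > 0 such that Γf(x) ≤ −ε for all x ∈ 𝕏; (2) the explosion time ζ satisfies E_x(ζ) < ∞ for all x ∈ 𝕏. -/

import Mathlib

/-
Since the holding times add up to `ζ` and, given the jump chain, `σ_{k+1}` is exponential of
rate `γ(ξ̃ₖ)`, we get `E_x ζ = ∑ₖ (Pᵏ h)(x)` with `h = 1/γ`. In terms of `P`, the condition
`Γf ≤ -ε` reads `Pf + ε h ≤ f`; iterating it gives `ε ∑ₖ Pᵏ h ≤ f`, hence `E_x ζ ≤ f(x)/ε`.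
Conversely, when every `E_x ζ` is finite, `f(x) := E_x ζ` solves `f = h + Pf`, that is `Γf = -1`.
-/


open MeasureTheory Set Filter
open scoped Classical ENNReal NNReal

/-- A continuous-time Markov chain on a countably infinite state space `X`,
described by its generator `Γ`, together with a probability space carrying,
for each starting point `x`, the embedded jump chain `jump` and the holding
times `hold` (with `hold n` the holding time at the `n`-th visited state). -/
structure CTMC where
  X : Type
  countX : Countable X
  infX : Infinite X
  Γ : X → X → ℝ
  γ : X → ℝ
  γ_pos : ∀ x, 0 < γ x
  Γ_offdiag_nonneg : ∀ x y, y ≠ x → 0 ≤ Γ x y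
  Γ_diag : ∀ x, Γ x x = - γ x
  γ_sum : ∀ x, HasSum (fun y => if y = x then 0 else Γ x y) (γ x)
  /-- irreducibility of the embedded jump chain -/
  irr : ∀ x y : X, ∃ (n : ℕ) (path : ℕ → X), path 0 = x ∧ path n = y ∧
    ∀ k, k < n → 0 < (if path (k+1) = path k then 0
      else Γ (path k) (path (k+1)) / γ (path k))
  Ω : Type
  measΩ : MeasurableSpace Ω
  μ : X → @Measure Ω measΩ
  probμ : ∀ x, @IsProbabilityMeasure Ω measΩ (μ x)
  jump : ℕ → Ω → X
  hold : ℕ → Ω → ℝ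
  jump_meas : ∀ (n : ℕ) (x : X), MeasurableSet[measΩ] {ω | jump n ω = x}
  hold_meas : ∀ n : ℕ, @Measurable Ω ℝ measΩ _ (hold n)
  hold_pos : ∀ n ω, 0 < hold n ω
  /-- under `μ x` the chain starts at `x` -/
  start : ∀ x : X, μ x {ω | jump 0 ω = x} = 1
  /-- finite-dimensional law: the embedded chain is Markov with transition
  probabilities `P x y = Γ x y / γ x` (for `y ≠ x`), and conditionally on the
  embedded chain the holding times are independent exponentials of rates
  `γ (jump n)` -/
  law : ∀ (x : X) (n : ℕ) (path : ℕ → X) (t : ℕ → ℝ), path 0 = x → (∀ k, 0 ≤ t k) →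
    μ x {ω | (∀ k, k ≤ n → jump k ω = path k) ∧ (∀ k, k < n → t k < hold k ω)}
      = ENNReal.ofReal (∏ k ∈ Finset.range n,
          ((if path (k+1) = path k then 0 else Γ (path k) (path (k+1)) / γ (path k))
            * Real.exp (-(γ (path k)) * t k)))

namespace CTMC

attribute [instance] CTMC.countX CTMC.infX CTMC.measΩ CTMC.probμ

variable (M : CTMC)

/-- embedded chain transition probabilities -/
noncomputable def P (x y : M.X) : ℝ := if y = x then 0 else M.Γ x y / M.γ x

/-- jump times -/
noncomputable def J (n : ℕ) (ω : M.Ω) : ℝ := ∑ k ∈ Finset.range n, M.hold k ω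

/-- explosion (life) time -/
noncomputable def zeta (ω : M.Ω) : ℝ≥0∞ := ⨆ n, ENNReal.ofReal (M.J n ω)

/-- the continuous-time chain: `pos t ω = some (jump n ω)` if `J n ≤ t < J (n+1)`,
and `none` (the cemetery state `∂`) after the explosion time. -/
noncomputable def pos (t : ℝ) (ω : M.Ω) : Option M.X :=
  if h : ∃ n, M.J n ω ≤ t ∧ t < M.J (n+1) ω then some (M.jump h.choose ω) else none

/-- passage time: `τ_A = inf {t ≥ 0 : ξ_t ∈ A}` -/
noncomputable def tau (A : Set M.X) (ω : M.Ω) : ℝ≥0∞ :=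
  sInf (ENNReal.ofReal '' {s : ℝ | 0 ≤ s ∧ ∃ a ∈ A, M.pos s ω = some a})

/-- `f` belongs to the domain of the generator -/
def InDom (f : M.X → ℝ) : Prop :=
  ∀ x : M.X, Summable (fun y => if y = x then 0 else M.Γ x y * f y)

/-- `f ∈ Dom_+(Γ)` -/
def InDomPos (f : M.X → ℝ) : Prop := (∀ x, 0 ≤ f x) ∧ M.InDom f

/-- action of the generator : `Γ f (x) = ∑_y Γ_{xy} f(y)` -/
noncomputable def gen (f : M.X → ℝ) (x : M.X) : ℝ :=
  (∑' y, if y = x then 0 else M.Γ x y * f y) - M.γ x * f x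

/-- recurrence of the embedded jump chain -/
def JumpRecurrent : Prop := ∀ x : M.X, M.μ x {ω | ∃ n, 1 ≤ n ∧ M.jump n ω = x} = 1

/-- `f → ∞` : all sublevel sets are finite -/
def FinSublevels (f : M.X → ℝ) : Prop := ∀ r : ℝ, {x : M.X | f x ≤ r}.Finite

end CTMC

section KernelSeries

variable {X : Type*} {p : X → X → ℝ≥0∞} {G : ℕ → X → ℝ≥0∞}

lemma sum_range_succ_of_kernel_recursion (hG : ∀ k x, G (k + 1) x = ∑' y, p x y * G k y)
    (n : ℕ) (x : X) :
    ∑ k ∈ Finset.range (n + 1), G k x = G 0 x + ∑' y, p x y * ∑ k ∈ Finset.range n, G k y := by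
  rw [Finset.sum_range_succ', add_comm]
  simp_rw [hG, Finset.mul_sum]
  rw [Summable.tsum_finsetSum fun _ _ => ENNReal.summable]

lemma tsum_eq_add_of_kernel_recursion (hG : ∀ k x, G (k + 1) x = ∑' y, p x y * G k y)
    (x : X) : ∑' k, G k x = G 0 x + ∑' y, p x y * ∑' k, G k y := by
  rw [tsum_eq_zero_add' ENNReal.summable]
  simp_rw [hG, ← ENNReal.tsum_mul_left]
  rw [ENNReal.tsum_comm]

lemma mul_tsum_le_of_supersolution (hG : ∀ k x, G (k + 1) x = ∑' y, p x y * G k y)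
    {c : ℝ≥0∞} {u : X → ℝ≥0∞} (hu : ∀ x, c * G 0 x + ∑' y, p x y * u y ≤ u x) (x : X) :
    c * ∑' k, G k x ≤ u x := by
  suffices h : ∀ n x, c * ∑ k ∈ Finset.range n, G k x ≤ u x by
    rw [ENNReal.tsum_eq_iSup_nat, ENNReal.mul_iSup]
    exact iSup_le fun n => h n x
  intro n
  induction n with
  | zero => simp
  | succ n ih =>
    intro x
    calc c * ∑ k ∈ Finset.range (n + 1), G k x
        = c * G 0 x + ∑' y, p x y * (c * ∑ k ∈ Finset.range n, G k y) := by
          rw [sum_range_succ_of_kernel_recursion hG, mul_add, ← ENNReal.tsum_mul_left]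
          simp_rw [mul_left_comm]
      _ ≤ c * G 0 x + ∑' y, p x y * u y := by gcongr with y; exact ih y
      _ ≤ u x := hu x

end KernelSeries

lemma lintegral_ofReal_exp_neg_mul_Ioi {c : ℝ} (hc : 0 < c) :
    ∫⁻ t in Set.Ioi 0, ENNReal.ofReal (Real.exp (-c * t)) = ENNReal.ofReal c⁻¹ := by
  rw [← ofReal_integral_eq_lintegral_ofReal (exp_neg_integrableOn_Ioi 0 hc)
    (ae_of_all _ fun t => (Real.exp_pos _).le)]
  have hscale := integral_comp_mul_left_Ioi (fun u => Real.exp (-u)) 0 hc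
  simp only [mul_zero, integral_exp_neg_Ioi_zero, smul_eq_mul, mul_one, neg_mul] at hscale ⊢
  rw [hscale]

lemma ENNReal.tsum_pi_fin_succ {α : Type*} {n : ℕ} (f : (Fin (n + 1) → α) → ℝ≥0∞) :
    ∑' q, f q = ∑' (y : α) (r : Fin n → α), f (Fin.cons y r) := by
  rw [← (Fin.consEquiv fun _ => α).tsum_eq, ENNReal.tsum_prod']
  rfl

namespace CTMC

variable (M : CTMC)

lemma P_nonneg (x y : M.X) : 0 ≤ M.P x y := by
  unfold P
  split_ifs with h
  · exact le_rfl
  · exact div_nonneg (M.Γ_offdiag_nonneg x y h) (M.γ_pos x).le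

lemma tsum_ofReal_P (x : M.X) : ∑' y, ENNReal.ofReal (M.P x y) = 1 := by
  have hP : HasSum (M.P x) 1 := by
    have e : M.P x = fun y => (if y = x then 0 else M.Γ x y) / M.γ x := by
      ext y
      unfold P
      split_ifs <;> simp
    simpa [e, div_self (M.γ_pos x).ne'] using (M.γ_sum x).div_const (M.γ x)
  rw [← ENNReal.ofReal_tsum_of_nonneg (M.P_nonneg x) hP.summable, hP.tsum_eq, ENNReal.ofReal_one]

lemma offDiag_mul_eq_γ_mul_P_mul (f : M.X → ℝ) (x y : M.X) :
    (if y = x then 0 else M.Γ x y * f y) = M.γ x * (M.P x y * f y) := by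
  unfold P
  split_ifs
  · simp
  · field_simp [(M.γ_pos x).ne']

lemma inDom_iff (f : M.X → ℝ) : M.InDom f ↔ ∀ x, Summable fun y => M.P x y * f y := by
  simp only [InDom, offDiag_mul_eq_γ_mul_P_mul, summable_mul_left_iff (M.γ_pos _).ne']

lemma gen_eq (f : M.X → ℝ) (x : M.X) :
    M.gen f x = M.γ x * ((∑' y, M.P x y * f y) - f x) := by
  simp only [gen, offDiag_mul_eq_γ_mul_P_mul, tsum_mul_left, mul_sub]

def pathFrom {X : Type} (x : X) {n : ℕ} (q : Fin n → X) : ℕ → X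
  | 0 => x
  | k + 1 => if h : k < n then q ⟨k, h⟩ else x

@[simp]
lemma pathFrom_zero {X : Type} (x : X) {n : ℕ} (q : Fin n → X) : pathFrom x q 0 = x :=
  rfl

lemma pathFrom_succ {X : Type} (x : X) {n : ℕ} (q : Fin n → X) {k : ℕ} (h : k < n) :
    pathFrom x q (k + 1) = q ⟨k, h⟩ :=
  dif_pos h

lemma pathFrom_cons {X : Type} (x y : X) {n : ℕ} (r : Fin n → X) {k : ℕ} (hk : k ≤ n) :
    pathFrom x (Fin.cons y r : Fin (n + 1) → X) (k + 1) = pathFrom y r k := by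
  cases k with
  | zero => rfl
  | succ j =>
    rw [pathFrom_succ x _ (by omega : j + 1 < n + 1), pathFrom_succ y r (by omega : j < n)]
    exact Fin.cons_succ (α := fun _ => X) y r ⟨j, _⟩

noncomputable def pathWeight (x : M.X) {n : ℕ} (q : Fin n → M.X) : ℝ :=
  ∏ k ∈ Finset.range n, M.P (pathFrom x q k) (pathFrom x q (k + 1))

lemma pathWeight_nonneg (x : M.X) {n : ℕ} (q : Fin n → M.X) : 0 ≤ M.pathWeight x q :=
  Finset.prod_nonneg fun _ _ => M.P_nonneg _ _

lemma pathWeight_cons (x y : M.X) {n : ℕ} (r : Fin n → M.X) :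
    M.pathWeight x (Fin.cons y r : Fin (n + 1) → M.X) = M.P x y * M.pathWeight y r := by
  rw [pathWeight, Finset.prod_range_succ', pathWeight, mul_comm]
  congr 1
  refine Finset.prod_congr rfl fun k hk => ?_
  have hk := Finset.mem_range.mp hk
  rw [pathFrom_cons x y r hk.le, pathFrom_cons x y r hk]

def cylinder (x : M.X) {n : ℕ} (q : Fin n → M.X) : Set M.Ω :=
  {ω | ∀ k ≤ n, M.jump k ω = pathFrom x q k}

lemma measurableSet_cylinder (x : M.X) {n : ℕ} (q : Fin n → M.X) :
    MeasurableSet (M.cylinder x q) := by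
  simp only [cylinder, Set.ofPred_forall]
  exact .iInter fun k => .iInter fun _ => M.jump_meas k _

lemma measure_cylinder_inter_hold_gt (x : M.X) {n m : ℕ} (q : Fin n → M.X) (hm : m < n)
    {t : ℝ} (ht : 0 ≤ t) :
    M.μ x (M.cylinder x q ∩ {ω | t < M.hold m ω})
      = ENNReal.ofReal (M.pathWeight x q * Real.exp (-M.γ (pathFrom x q m) * t)) := by
  have hset : M.cylinder x q ∩ {ω | t < M.hold m ω} = {ω | (∀ k ≤ n, M.jump k ω = pathFrom x q k)
      ∧ ∀ k < n, (if k = m then t else 0) < M.hold k ω} := by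
    ext ω
    refine and_congr_right fun _ => ⟨fun h k _ => ?_, fun h => by simpa using h m hm⟩
    split_ifs with hkm
    · exact hkm ▸ h
    · exact M.hold_pos k ω
  rw [hset, M.law x n (pathFrom x q) _ rfl fun k => by split_ifs <;> simp [ht]]
  congr 1
  have hsel := Finset.prod_ite_eq' (Finset.range n) m fun k => Real.exp (-M.γ (pathFrom x q k) * t)
  rw [if_pos (Finset.mem_range.mpr hm)] at hsel
  rw [pathWeight, ← hsel, ← Finset.prod_mul_distrib]
  refine Finset.prod_congr rfl fun k _ => ?_
  unfold P
  split_ifs <;> simp_all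

lemma measure_eq_tsum_cylinder_inter (x : M.X) (n : ℕ) {B : Set M.Ω} (hB : MeasurableSet B) :
    M.μ x B = ∑' q : Fin n → M.X, M.μ x (M.cylinder x q ∩ B) := by
  have hcover : {ω | M.jump 0 ω = x} = ⋃ q : Fin n → M.X, M.cylinder x q := by
    ext ω
    simp only [Set.mem_ofPred_eq, Set.mem_iUnion]
    refine ⟨fun h0 => ⟨fun i => M.jump (i + 1) ω, fun k hk => ?_⟩, fun ⟨q, hq⟩ => hq 0 n.zero_le⟩
    cases k with
    | zero => exact h0
    | succ j => rw [pathFrom_succ x _ (by omega : j < n)]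
  have hdisj : Pairwise (Function.onFun Disjoint fun q : Fin n → M.X => M.cylinder x q ∩ B) := by
    intro q q' hne
    obtain ⟨i, hi⟩ := Function.ne_iff.mp hne
    refine Set.disjoint_left.mpr fun ω ⟨hq, _⟩ ⟨hq', _⟩ => hi ?_
    have h := hq (i + 1) i.isLt
    have h' := hq' (i + 1) i.isLt
    rwa [pathFrom_succ x q i.isLt, h', pathFrom_succ x q' i.isLt, eq_comm] at h
  have hstart : M.μ x {ω | M.jump 0 ω = x}ᶜ = 0 := by
    rw [measure_compl (M.jump_meas 0 x) (measure_ne_top _ _), M.start x, measure_univ, tsub_self]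
  calc M.μ x B = M.μ x (B ∩ {ω | M.jump 0 ω = x}) := (measure_inter_conull hstart).symm
    _ = M.μ x (⋃ q : Fin n → M.X, M.cylinder x q ∩ B) := by
        rw [hcover, Set.inter_iUnion]
        simp_rw [Set.inter_comm B]
    _ = ∑' q : Fin n → M.X, M.μ x (M.cylinder x q ∩ B) :=
        measure_iUnion hdisj fun q => (M.measurableSet_cylinder x q).inter hB

noncomputable def meanHold (m : ℕ) (x : M.X) : ℝ≥0∞ :=
  ∫⁻ ω, ENNReal.ofReal (M.hold m ω) ∂M.μ x

lemma meanHold_eq_tsum (m : ℕ) (x : M.X) :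
    M.meanHold m x = ∑' q : Fin (m + 1) → M.X,
      ENNReal.ofReal (M.pathWeight x q) * ENNReal.ofReal (M.γ (pathFrom x q m))⁻¹ := by
  rw [meanHold, lintegral_eq_lintegral_meas_lt _ (ae_of_all _ fun ω => (M.hold_pos m ω).le)
    (M.hold_meas m).aemeasurable]
  have hlayer : ∀ t ∈ Set.Ioi (0 : ℝ), M.μ x {ω | t < M.hold m ω} =
      ∑' q : Fin (m + 1) → M.X, ENNReal.ofReal (M.pathWeight x q) *
        ENNReal.ofReal (Real.exp (-M.γ (pathFrom x q m) * t)) := by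
    intro t ht
    rw [M.measure_eq_tsum_cylinder_inter x (m + 1)
      (measurableSet_lt measurable_const (M.hold_meas m))]
    refine tsum_congr fun q => ?_
    rw [M.measure_cylinder_inter_hold_gt x q m.lt_succ_self (le_of_lt ht),
      ENNReal.ofReal_mul (M.pathWeight_nonneg x q)]
  rw [setLIntegral_congr_fun measurableSet_Ioi hlayer,
    lintegral_tsum fun q => Measurable.aemeasurable (by fun_prop)]
  refine tsum_congr fun q => ?_
  rw [lintegral_const_mul _ (by fun_prop),
    lintegral_ofReal_exp_neg_mul_Ioi (M.γ_pos (pathFrom x q m))]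

lemma meanHold_zero (x : M.X) : M.meanHold 0 x = ENNReal.ofReal (M.γ x)⁻¹ := by
  simp only [meanHold_eq_tsum, ENNReal.tsum_pi_fin_succ, pathWeight_cons, pathFrom_zero,
    tsum_fintype, Finset.univ_unique, Finset.sum_singleton]
  simp only [pathWeight, Finset.prod_range_zero, mul_one]
  rw [ENNReal.tsum_mul_right, tsum_ofReal_P, one_mul]

lemma meanHold_succ (m : ℕ) (x : M.X) :
    M.meanHold (m + 1) x = ∑' y, ENNReal.ofReal (M.P x y) * M.meanHold m y := by
  rw [meanHold_eq_tsum, ENNReal.tsum_pi_fin_succ]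
  refine tsum_congr fun y => ?_
  rw [meanHold_eq_tsum, ← ENNReal.tsum_mul_left]
  refine tsum_congr fun r => ?_
  rw [pathWeight_cons, pathFrom_cons x y r m.le_succ, ENNReal.ofReal_mul (M.P_nonneg x y),
    mul_assoc]

lemma lintegral_zeta (x : M.X) : ∫⁻ ω, M.zeta ω ∂M.μ x = ∑' k, M.meanHold k x := by
  have hJ : ∀ n ω, ENNReal.ofReal (M.J n ω) = ∑ k ∈ Finset.range n, ENNReal.ofReal (M.hold k ω) :=
    fun n ω => ENNReal.ofReal_sum_of_nonneg fun k _ => (M.hold_pos k ω).le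
  have hmono : Monotone fun n ω => ENNReal.ofReal (M.J n ω) := fun a b hab ω => by
    simp only [hJ]
    exact Finset.sum_le_sum_of_subset (Finset.range_subset_range.mpr hab)
  have hmeas : ∀ n, Measurable fun ω => ENNReal.ofReal (M.J n ω) := fun n =>
    (Finset.measurable_sum _ fun k _ => M.hold_meas k).ennreal_ofReal
  unfold zeta
  rw [ENNReal.tsum_eq_iSup_nat, lintegral_iSup hmeas hmono]
  refine iSup_congr fun n => ?_
  simp only [hJ]
  exact lintegral_finsetSum _ fun k _ => (M.hold_meas k).ennreal_ofReal

lemma ofReal_supersolution_of_gen_le {f : M.X → ℝ} {ε : ℝ} (hf : M.InDomPos f) (hε : 0 ≤ ε)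
    {x : M.X} (hgen : M.gen f x ≤ -ε) :
    ENNReal.ofReal ε * ENNReal.ofReal (M.γ x)⁻¹ +
        ∑' y, ENNReal.ofReal (M.P x y) * ENNReal.ofReal (f y) ≤ ENNReal.ofReal (f x) := by
  have hnonneg : ∀ y, 0 ≤ M.P x y * f y := fun y => mul_nonneg (M.P_nonneg x y) (hf.1 y)
  have hreal : ε * (M.γ x)⁻¹ + ∑' y, M.P x y * f y ≤ f x := by
    rw [gen_eq] at hgen
    have h : ε ≤ M.γ x * (f x - ∑' y, M.P x y * f y) := by linarith
    linarith [(div_le_iff₀' (M.γ_pos x)).2 h, div_eq_mul_inv ε (M.γ x)]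
  simp_rw [← ENNReal.ofReal_mul (M.P_nonneg x _)]
  rw [← ENNReal.ofReal_mul hε, ← ENNReal.ofReal_tsum_of_nonneg hnonneg ((M.inDom_iff f).1 hf.2 x),
    ← ENNReal.ofReal_add (mul_nonneg hε (inv_nonneg.2 (M.γ_pos x).le)) (tsum_nonneg hnonneg)]
  exact ENNReal.ofReal_le_ofReal hreal

lemma hasSum_P_mul_toReal {h : M.X → ℝ≥0∞} {x : M.X}
    (hx : ∑' y, ENNReal.ofReal (M.P x y) * h y ≠ ⊤) :
    HasSum (fun y => M.P x y * (h y).toReal) (∑' y, ENNReal.ofReal (M.P x y) * h y).toReal := by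
  have hterm : ∀ y, (ENNReal.ofReal (M.P x y) * h y).toReal = M.P x y * (h y).toReal := fun y => by
    rw [ENNReal.toReal_mul, ENNReal.toReal_ofReal (M.P_nonneg x y)]
  rw [ENNReal.tsum_toReal_eq fun y => ENNReal.ne_top_of_tsum_ne_top hx y]
  simpa only [hterm] using ENNReal.hasSum_toReal hx

lemma inDomPos_pos_gen_eq_neg_one_of_eq_inv_add_tsum {h : M.X → ℝ≥0∞}
    (hrec : ∀ x, h x = ENNReal.ofReal (M.γ x)⁻¹ + ∑' y, ENNReal.ofReal (M.P x y) * h y)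
    (hfin : ∀ x, h x ≠ ⊤) :
    M.InDomPos (fun x => (h x).toReal) ∧ (∀ x, 0 < (h x).toReal) ∧
      ∀ x, M.gen (fun x => (h x).toReal) x = -1 := by
  have hrest : ∀ x, ∑' y, ENNReal.ofReal (M.P x y) * h y ≠ ⊤ := fun x =>
    ne_top_of_le_ne_top (hfin x) ((hrec x).symm ▸ le_add_self)
  have hfix : ∀ x, (h x).toReal = (M.γ x)⁻¹ + ∑' y, M.P x y * (h y).toReal := fun x => by
    rw [hrec x, ENNReal.toReal_add ENNReal.ofReal_ne_top (hrest x),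
      ENNReal.toReal_ofReal (inv_nonneg.2 (M.γ_pos x).le),
      (M.hasSum_P_mul_toReal (hrest x)).tsum_eq]
  refine ⟨⟨fun x => ENNReal.toReal_nonneg,
    (M.inDom_iff _).2 fun x => (M.hasSum_P_mul_toReal (hrest x)).summable⟩,
    fun x => ?_, fun x => ?_⟩
  · rw [hfix x]
    exact add_pos_of_pos_of_nonneg (inv_pos.2 (M.γ_pos x))
      (tsum_nonneg fun y => mul_nonneg (M.P_nonneg x y) ENNReal.toReal_nonneg)
  · rw [gen_eq, hfix x, sub_add_cancel_right, mul_neg, mul_inv_cancel₀ (M.γ_pos x).ne']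

end CTMC

open CTMC in
/-- Theorem (explosion): there exists a strictly positive `f ∈ Dom_+(Γ)` with
`Γ f ≤ -ε` everywhere iff the explosion time has finite expectation from
every starting point. -/
theorem statement3 (M : CTMC) :
    (∃ (f : M.X → ℝ) (ε : ℝ), M.InDomPos f ∧ (∀ x, 0 < f x) ∧ 0 < ε ∧
      ∀ x : M.X, M.gen f x ≤ -ε) ↔
    (∀ x : M.X, ∫⁻ ω, M.zeta ω ∂ M.μ x < ⊤) := by
  simp only [lintegral_zeta]
  constructor
  · rintro ⟨f, ε, hf, -, hε, hgen⟩ x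
    have hsuper : ∀ x, ENNReal.ofReal ε * M.meanHold 0 x +
        ∑' y, ENNReal.ofReal (M.P x y) * ENNReal.ofReal (f y) ≤ ENNReal.ofReal (f x) := fun x =>
      M.meanHold_zero x ▸ M.ofReal_supersolution_of_gen_le hf hε.le (hgen x)
    have hbound := mul_tsum_le_of_supersolution M.meanHold_succ hsuper x
    exact ENNReal.lt_top_of_mul_ne_top_right (ne_top_of_le_ne_top ENNReal.ofReal_ne_top hbound)
      (ENNReal.ofReal_pos.2 hε).ne'
  · intro hfin
    have hrec := tsum_eq_add_of_kernel_recursion M.meanHold_succ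
    simp only [meanHold_zero] at hrec
    obtain ⟨hdom, hpos, hgen⟩ :=
      M.inDomPos_pos_gen_eq_neg_one_of_eq_inv_add_tsum hrec fun x => (hfin x).ne
    exact ⟨_, 1, hdom, hpos, one_pos, fun x => (hgen x).le⟩
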